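/- For t ∈ (0,π], let θ(t) and ψ(t) denote, respectively, the positive angle between the chord [0, E(t)] and the tangent direction of E at E(t), and the angle between the chord and the tangent direction at 0 (i.e., ψ(t) = arg(E(t)) since E'(0) is horizontal). Then θ(π) = ψ(π) = π/2 and the one-sided derivatives at π satisfy −θ'(π) = ψ'(π) = 1/d, where d = ξ(π). -/

import Mathlib

/-!
At `t = π` the chord `E π = i ξ(π)` is vertical and the tangent `E'(π) = -1` is horizontal.
Near `π` we have `ξ > 0`, so `ψ = π/2 - arctan (sin t / ξ t)`, and the derivative of
`sin t / ξ t` at `π` is `cos π / ξ π = -1/d`, giving `ψ'(π) = 1/d`. The tangent angle turns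
with the curvature `2 sin t / √(1 + sin² t)`, which vanishes at `π`, so `θ'(π) = -ψ'(π)`.
-/

open Real

/-- The function ξ, antiderivative of sin²t/√(1+sin²t) vanishing at 0. -/
noncomputable def xi (t : ℝ) : ℝ := ∫ r in (0:ℝ)..t, Real.sin r ^ 2 / Real.sqrt (1 + Real.sin r ^ 2)

/-- The rectangular elastica E(t) = sin t + i ξ(t). -/
noncomputable def E (t : ℝ) : ℂ := Real.sin t + xi t * Complex.I

/-- ψ(t): the angle between the chord [0, E(t)] and the (horizontal) tangent at 0. -/
noncomputable def psi (t : ℝ) : ℝ := Complex.arg (E t)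

/-- The direction angle of the tangent of E at parameter t (the turning angle of E on [0,t]). -/
noncomputable def tangentAngle (t : ℝ) : ℝ := 2 * arccos (Real.cos t / Real.sqrt 2) - π / 2

/-- θ(t): the positive angle between the chord [0, E(t)] and the tangent direction at E(t). -/
noncomputable def theta (t : ℝ) : ℝ := tangentAngle t - psi t

open Filter Topology

lemma continuous_xi_integrand :
    Continuous fun r : ℝ => sin r ^ 2 / √(1 + sin r ^ 2) :=
  Continuous.div (by fun_prop) (by fun_prop) fun r => by positivity

lemma hasDerivAt_xi (t : ℝ) : HasDerivAt xi (sin t ^ 2 / √(1 + sin t ^ 2)) t :=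
  intervalIntegral.integral_hasDerivAt_right (continuous_xi_integrand.intervalIntegrable _ _)
    (continuous_xi_integrand.stronglyMeasurableAtFilter _ _) continuous_xi_integrand.continuousAt

lemma xi_pi_pos : 0 < xi π :=
  intervalIntegral.intervalIntegral_pos_of_pos_on (continuous_xi_integrand.intervalIntegrable _ _)
    (fun r hr => by have := sin_pos_of_pos_of_lt_pi hr.1 hr.2; positivity) pi_pos

lemma arg_eq_pi_div_two_sub_arctan_of_im_pos {z : ℂ} (hz : 0 < z.im) :
    z.arg = π / 2 - arctan (z.re / z.im) := by
  have hpos : 0 < z.arg := (Complex.arg_nonneg_iff.mpr hz.le).lt_of_ne'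
    fun h => hz.ne' (Complex.arg_eq_zero_iff.mp h).2
  have hlt : z.arg < π := Complex.arg_lt_pi_iff.mpr (Or.inr hz.ne')
  rw [← inv_div z.im z.re, ← Complex.tan_arg, ← tan_pi_div_two_sub,
    arctan_tan (by linarith) (by linarith)]
  ring

lemma psi_pi : psi π = π / 2 :=
  Complex.arg_eq_pi_div_two_iff.mpr (by simp [E, xi_pi_pos])

lemma psi_eventuallyEq_arctan :
    psi =ᶠ[𝓝 π] fun t => π / 2 - arctan (sin t / xi t) := by
  filter_upwards [(hasDerivAt_xi π).continuousAt.eventually (eventually_gt_nhds xi_pi_pos)]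
    with t ht
  have hre : (E t).re = sin t := by simp [E, Complex.sin_ofReal_re]
  have him : (E t).im = xi t := by simp [E]
  rw [psi, arg_eq_pi_div_two_sub_arctan_of_im_pos (him ▸ ht), hre, him]

lemma hasDerivAt_psi_pi : HasDerivAt psi (1 / xi π) π := by
  have hquot : HasDerivAt (fun t => sin t / xi t) (-(1 / xi π)) π := by
    refine ((hasDerivAt_sin π).div (hasDerivAt_xi π) xi_pi_pos.ne').congr_deriv ?_
    norm_num [sin_pi, cos_pi]
    field_simp
  have harctan := (hasDerivAt_arctan _).comp π hquot
  rw [sin_pi, zero_div] at harctan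
  refine ((hasDerivAt_const π (π / 2)).sub harctan).congr_of_eventuallyEq
    psi_eventuallyEq_arctan |>.congr_deriv ?_
  norm_num

lemma abs_cos_div_sqrt_two_lt_one (t : ℝ) : |cos t / √2| < 1 := by
  rw [abs_div, abs_of_pos (by positivity : (0 : ℝ) < √2), div_lt_one (by positivity)]
  exact (abs_cos_le_one t).trans_lt (by rw [lt_sqrt zero_le_one]; norm_num)

lemma hasDerivAt_tangentAngle (t : ℝ) :
    HasDerivAt tangentAngle (2 * sin t / √(1 + sin t ^ 2)) t := by
  obtain ⟨hlo, hhi⟩ := abs_lt.mp (abs_cos_div_sqrt_two_lt_one t)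
  have harccos := (hasDerivAt_arccos hlo.ne' hhi.ne).comp t ((hasDerivAt_cos t).div_const √2)
  refine ((harccos.const_mul 2).sub_const (π / 2)).congr_deriv ?_
  have hsq : √(1 - (cos t / √2) ^ 2) * √2 = √(1 + sin t ^ 2) := by
    rw [← sqrt_mul (by nlinarith), div_pow, sq_sqrt zero_le_two]
    congr 1
    nlinarith [sin_sq_add_cos_sq t]
  rw [← hsq]
  field_simp

lemma tangentAngle_pi : tangentAngle π = π := by
  have hcos : cos π / √2 = -cos (π / 4) := by
    rw [cos_pi, cos_pi_div_four]
    field_simp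
    rw [sq_sqrt zero_le_two]
  rw [tangentAngle, hcos, arccos_neg, arccos_cos (by positivity) (by linarith [pi_pos])]
  ring

theorem stmt_16 :
    theta π = π / 2 ∧ psi π = π / 2 ∧
    HasDerivWithinAt theta (-(1 / xi π)) (Set.Iic π) π ∧
    HasDerivWithinAt psi (1 / xi π) (Set.Iic π) π := by
  have htheta : HasDerivAt theta (-(1 / xi π)) π := by
    refine ((hasDerivAt_tangentAngle π).sub hasDerivAt_psi_pi).congr_deriv ?_
    simp
  refine ⟨?_, psi_pi, htheta.hasDerivWithinAt, hasDerivAt_psi_pi.hasDerivWithinAt⟩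
  rw [theta, tangentAngle_pi, psi_pi]
  ring
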